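/- Let B be an n × n random matrix whose entries are independent Bernoulli random variables with mean p, and let ε ∈ (0,1/2]. Call a row of B heavy if it contains more than 21pn + 2·ln ε^{−1} ones. Then with probability at least 1 − exp(−εn/2), the total number of ones contained in all heavy rows of B is at most εn. -/

import Mathlib

/-!
Let `t = 21pn + 2 ln ε⁻¹` and let `Yᵢ` be the `i`-th row sum `Sᵢ` if it exceeds `t`, else `0`.
Pointwise `exp Yᵢ ≤ 1 + exp (2Sᵢ - t)`, and `E exp (2Sᵢ) = (1 + (e² - 1)p)ⁿ ≤ exp (21pn)`, so
`E exp Yᵢ ≤ 1 + ε²`. The rows are independent, hence `E exp (∑ Yᵢ) ≤ (1 + ε²)ⁿ ≤ exp (ε²n)`, and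
Chernoff's bound gives `P(∑ Yᵢ ≥ εn) ≤ exp (ε²n - εn) ≤ exp (-εn/2)` because `ε ≤ 1/2`.
-/

open MeasureTheory ProbabilityTheory Measure Real

lemma ProbabilityTheory.iIndepFun.curry {Ω ι κ : Type*} {mΩ : MeasurableSpace Ω}
    {P : Measure Ω} {𝓧 : ι → κ → Type*} {m𝓧 : ∀ i j, MeasurableSpace (𝓧 i j)}
    {X : (i : ι) → (j : κ) → Ω → 𝓧 i j} (mX : ∀ i j, Measurable (X i j))
    (h : iIndepFun (fun (q : ι × κ) ω ↦ X q.1 q.2 ω) P) :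
    iIndepFun (fun i ω ↦ (X i · ω)) P := by
  have := h.isProbabilityMeasure
  have hσ : iIndepFun (fun (q : (_ : ι) × κ) ω ↦ X q.1 q.2 ω) P :=
    h.precomp (Equiv.sigmaEquivProd ι κ).injective
  have hrow : ∀ i, iIndepFun (X i) P := fun i ↦
    h.precomp (g := fun j ↦ (i, j)) (Prod.mk_right_injective i)
  have : ∀ i j, IsProbabilityMeasure (P.map (X i j)) :=
    fun i j ↦ isProbabilityMeasure_map (mX i j).aemeasurable
  have hcurry : (fun ω i j ↦ X i j ω) =
      MeasurableEquiv.piCurry 𝓧 ∘ fun ω (q : (_ : ι) × κ) ↦ X q.1 q.2 ω := by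
    ext; simp [Sigma.curry]
  rw [iIndepFun_iff_map_fun_eq_infinitePi_map (by fun_prop), hcurry,
    ← map_map (by fun_prop) (by fun_prop), hσ.map_fun_eq_infinitePi_map (by fun_prop),
    infinitePi_map_piCurry fun i j ↦ P.map (X i j)]
  congrm infinitePi fun i ↦ ?_
  rw [(hrow i).map_fun_eq_infinitePi_map (mX i)]

section Bernoulli

variable {Ω : Type*} {mΩ : MeasurableSpace Ω} {μ : Measure Ω}

lemma exp_mul_ae_eq_of_ae_zero_or_one {X : Ω → ℝ} (h01 : ∀ᵐ ω ∂μ, X ω = 0 ∨ X ω = 1) (t : ℝ) :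
    (fun ω ↦ exp (t * X ω)) =ᵐ[μ] fun ω ↦ 1 + {ω | X ω = 1}.indicator (fun _ ↦ exp t - 1) ω := by
  filter_upwards [h01] with ω hω
  rcases hω with h | h <;> simp [Set.indicator, h]

lemma integrable_exp_mul_of_ae_zero_or_one [IsFiniteMeasure μ] {X : Ω → ℝ} (hX : Measurable X)
    (h01 : ∀ᵐ ω ∂μ, X ω = 0 ∨ X ω = 1) (t : ℝ) :
    Integrable (fun ω ↦ exp (t * X ω)) μ :=
  ((integrable_const 1).add ((integrable_const _).indicator (hX (measurableSet_singleton 1)))).congr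
    (exp_mul_ae_eq_of_ae_zero_or_one h01 t).symm

lemma mgf_of_ae_zero_or_one [IsProbabilityMeasure μ] {X : Ω → ℝ} (hX : Measurable X)
    (h01 : ∀ᵐ ω ∂μ, X ω = 0 ∨ X ω = 1) (t : ℝ) :
    mgf X μ t = 1 + (exp t - 1) * μ.real {ω | X ω = 1} := by
  have hA : MeasurableSet {ω | X ω = 1} := hX (measurableSet_singleton 1)
  rw [mgf, integral_congr_ae (exp_mul_ae_eq_of_ae_zero_or_one h01 t),
    integral_add (integrable_const 1) ((integrable_const _).indicator hA), integral_const,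
    integral_indicator_const _ hA]
  simp [mul_comm]

variable {ι : Type*} [Fintype ι] {X : ι → Ω → ℝ}

lemma integrable_exp_mul_sum_of_ae_zero_or_one [IsFiniteMeasure μ] (hX : ∀ i, Measurable (X i))
    (hindep : iIndepFun X μ) (h01 : ∀ i, ∀ᵐ ω ∂μ, X i ω = 0 ∨ X i ω = 1) (t : ℝ) :
    Integrable (fun ω ↦ exp (t * ∑ i, X i ω)) μ := by
  simpa using hindep.integrable_exp_mul_sum hX fun i _ ↦
    integrable_exp_mul_of_ae_zero_or_one (hX i) (h01 i) t

lemma mgf_sum_of_bernoulli [IsProbabilityMeasure μ] (hX : ∀ i, Measurable (X i))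
    (hindep : iIndepFun X μ) (h01 : ∀ i, ∀ᵐ ω ∂μ, X i ω = 0 ∨ X i ω = 1) {p : ℝ} (hp : 0 ≤ p)
    (hber : ∀ i, μ {ω | X i ω = 1} = ENNReal.ofReal p) (t : ℝ) :
    mgf (fun ω ↦ ∑ i, X i ω) μ t = (1 + (exp t - 1) * p) ^ Fintype.card ι := by
  simp [← Finset.sum_apply, hindep.mgf_sum hX, mgf_of_ae_zero_or_one (hX _) (h01 _),
    measureReal_def, hber, ENNReal.toReal_ofReal hp]

end Bernoulli

noncomputable def heavyPart (t x : ℝ) : ℝ := if t < x then x else 0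

lemma measurable_heavyPart (t : ℝ) : Measurable (heavyPart t) :=
  Measurable.ite measurableSet_Ioi measurable_id measurable_const

lemma exp_heavyPart_le (t x : ℝ) : exp (heavyPart t x) ≤ 1 + exp (-t) * exp (2 * x) := by
  rw [← exp_add]
  unfold heavyPart
  split_ifs with h
  · linarith [exp_le_exp.mpr (show x ≤ -t + 2 * x by linarith), exp_pos (-t + 2 * x)]
  · linarith [exp_pos (-t + 2 * x), exp_zero]

section MgfBounds

variable {Ω : Type*} {mΩ : MeasurableSpace Ω} {μ : Measure Ω}

lemma integrable_exp_heavyPart [IsFiniteMeasure μ] {S : Ω → ℝ} (hS : Measurable S)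
    (hint : Integrable (fun ω ↦ exp (2 * S ω)) μ) (t : ℝ) :
    Integrable (fun ω ↦ exp (heavyPart t (S ω))) μ := by
  refine ((integrable_const 1).add (hint.const_mul (exp (-t)))).mono'
    ((measurable_heavyPart t).comp hS).exp.aestronglyMeasurable (ae_of_all _ fun ω ↦ ?_)
  rw [norm_of_nonneg (exp_pos _).le]
  exact exp_heavyPart_le t (S ω)

lemma mgf_heavyPart_le [IsProbabilityMeasure μ] {S : Ω → ℝ} (hS : Measurable S)
    (hint : Integrable (fun ω ↦ exp (2 * S ω)) μ) (t : ℝ) :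
    mgf (fun ω ↦ heavyPart t (S ω)) μ 1 ≤ 1 + exp (-t) * mgf S μ 2 := by
  simp only [mgf, one_mul]
  calc ∫ ω, exp (heavyPart t (S ω)) ∂μ ≤ ∫ ω, 1 + exp (-t) * exp (2 * S ω) ∂μ :=
        integral_mono (integrable_exp_heavyPart hS hint t)
          ((integrable_const 1).add (hint.const_mul _)) fun ω ↦ exp_heavyPart_le t (S ω)
    _ = 1 + exp (-t) * ∫ ω, exp (2 * S ω) ∂μ := by
        rw [integral_add (integrable_const 1) (hint.const_mul _), integral_const_mul]
        simp

lemma ofReal_one_sub_exp_mul_mgf_le [IsProbabilityMeasure μ] {X : Ω → ℝ}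
    (hint : Integrable (fun ω ↦ exp (X ω)) μ) (a : ℝ) :
    ENNReal.ofReal (1 - exp (-a) * mgf X μ 1) ≤ μ {ω | X ω ≤ a} := by
  have hchernoff : μ.real {ω | a ≤ X ω} ≤ exp (-a) * mgf X μ 1 := by
    simpa using measure_ge_le_exp_mul_mgf a zero_le_one (by simpa using hint)
  have hcover : (1 : ENNReal) ≤ μ {ω | X ω ≤ a} + μ {ω | a ≤ X ω} := by
    rw [← measure_univ (μ := μ)]
    exact (measure_mono fun ω _ ↦ le_total (X ω) a).trans (measure_union_le _ _)
  calc ENNReal.ofReal (1 - exp (-a) * mgf X μ 1)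
      ≤ ENNReal.ofReal (1 - μ.real {ω | a ≤ X ω}) := by gcongr
    _ = 1 - μ {ω | a ≤ X ω} := by
        rw [ENNReal.ofReal_sub _ measureReal_nonneg, ENNReal.ofReal_one, measureReal_def,
          ENNReal.ofReal_toReal (measure_ne_top _ _)]
    _ ≤ μ {ω | X ω ≤ a} := tsub_le_iff_right.mpr hcover

end MgfBounds

lemma exp_two_sub_one_le : exp 2 - 1 ≤ 21 := by
  have : exp 2 = exp 1 * exp 1 := by rw [← exp_add]; norm_num
  nlinarith [exp_one_lt_d9, exp_pos 1]

lemma exp_neg_mul_one_add_pow_le {p ε : ℝ} (hp : 0 ≤ p) (hε : 0 < ε) (n : ℕ) :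
    exp (-(21 * p * n + 2 * log ε⁻¹)) * (1 + (exp 2 - 1) * p) ^ n ≤ ε ^ 2 := by
  calc exp (-(21 * p * n + 2 * log ε⁻¹)) * (1 + (exp 2 - 1) * p) ^ n
      ≤ exp (-(21 * p * n + 2 * log ε⁻¹)) * exp ((exp 2 - 1) * p) ^ n := by
        gcongr
        · nlinarith [add_one_le_exp 2]
        · exact add_comm ((exp 2 - 1) * p) 1 ▸ add_one_le_exp _
    _ = exp (-(21 - (exp 2 - 1)) * p * n) * exp (log ε) ^ 2 := by
        rw [← exp_nat_mul, ← exp_add, log_inv, ← exp_nat_mul, ← exp_add]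
        ring_nf
    _ ≤ ε ^ 2 := by
        rw [exp_log hε]
        refine mul_le_of_le_one_left (by positivity) (exp_le_one_iff.mpr ?_)
        have := exp_two_sub_one_le
        have : 0 ≤ p * n := by positivity
        nlinarith

lemma exp_neg_mul_one_add_sq_pow_le {ε : ℝ} (hε0 : 0 ≤ ε) (hε1 : ε ≤ 1 / 2) (n : ℕ) :
    exp (-(ε * n)) * (1 + ε ^ 2) ^ n ≤ exp (-(ε * n) / 2) := by
  calc exp (-(ε * n)) * (1 + ε ^ 2) ^ n ≤ exp (-(ε * n)) * exp (ε ^ 2) ^ n := by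
        gcongr
        exact add_comm (ε ^ 2) 1 ▸ add_one_le_exp _
    _ = exp (-(ε * n) + n * ε ^ 2) := by rw [← exp_nat_mul, ← exp_add]
    _ ≤ exp (-(ε * n) / 2) := by
        gcongr
        have : 0 ≤ ε * n := by positivity
        nlinarith

open Classical in
theorem bernoulli_heavy_rows_general
    (n : ℕ) (Ω : Type) [MeasureSpace Ω] [IsProbabilityMeasure (ℙ : Measure Ω)]
    (p : ℝ) (hp0 : 0 ≤ p)
    (B : Ω → Matrix (Fin n) (Fin n) ℝ)
    (hmeas : ∀ i j, Measurable fun ω => B ω i j)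
    (hindep : iIndepFun
      (fun q : Fin n × Fin n => fun ω => B ω q.1 q.2) ℙ)
    (h01 : ∀ i j, ∀ᵐ ω ∂ℙ, B ω i j = 0 ∨ B ω i j = 1)
    (hber : ∀ i j, ℙ {ω | B ω i j = 1} = ENNReal.ofReal p)
    (ε : ℝ) (hε0 : 0 < ε) (hε1 : ε ≤ 1 / 2) :
    ENNReal.ofReal (1 - Real.exp (-(ε * n) / 2)) ≤
      ℙ {ω | ∑ i, (if 21 * p * n + 2 * Real.log ε⁻¹ < ∑ j, B ω i j
          then ∑ j, B ω i j else 0) ≤ ε * n} := by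
  set t := 21 * p * n + 2 * Real.log ε⁻¹
  let S : Fin n → Ω → ℝ := fun i ω ↦ ∑ j, B ω i j
  let Y : Fin n → Ω → ℝ := fun i ω ↦ heavyPart t (S i ω)
  have hS : ∀ i, Measurable (S i) := fun i ↦ Finset.measurable_sum _ fun j _ ↦ hmeas i j
  have hrow : ∀ i, iIndepFun (fun j ω ↦ B ω i j) ℙ := fun i ↦
    hindep.precomp (g := fun j ↦ (i, j)) (Prod.mk_right_injective i)
  have hS_int : ∀ i, Integrable (fun ω ↦ exp (2 * S i ω)) ℙ := fun i ↦
    integrable_exp_mul_sum_of_ae_zero_or_one (hmeas i) (hrow i) (h01 i) 2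
  have hY_mgf : ∀ i, mgf (Y i) ℙ 1 ≤ 1 + ε ^ 2 := fun i ↦ by
    refine (mgf_heavyPart_le (hS i) (hS_int i) t).trans ?_
    rw [mgf_sum_of_bernoulli (hmeas i) (hrow i) (h01 i) hp0 (hber i), Fintype.card_fin]
    linarith [exp_neg_mul_one_add_pow_le hp0 hε0 n]
  have hY : iIndepFun Y ℙ :=
    (hindep.curry hmeas).comp (fun _ r ↦ heavyPart t (∑ j, r j)) fun _ ↦
      (measurable_heavyPart t).comp (Finset.measurable_sum _ fun j _ ↦ measurable_pi_apply j)
  have hY_meas : ∀ i, Measurable (Y i) := fun i ↦ (measurable_heavyPart t).comp (hS i)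
  have hW_mgf : mgf (∑ i, Y i) ℙ 1 ≤ (1 + ε ^ 2) ^ n := by
    rw [hY.mgf_sum hY_meas]
    exact (Finset.prod_le_prod (fun i _ ↦ mgf_nonneg) fun i _ ↦ hY_mgf i).trans_eq (by simp)
  have hW_int : Integrable (fun ω ↦ exp ((∑ i, Y i) ω)) ℙ := by
    simpa using hY.integrable_exp_mul_sum (t := 1) hY_meas fun i _ ↦
      by simpa using integrable_exp_heavyPart (hS i) (hS_int i) t
  calc ENNReal.ofReal (1 - exp (-(ε * n) / 2))
      ≤ ENNReal.ofReal (1 - exp (-(ε * n)) * mgf (∑ i, Y i) ℙ 1) := by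
        gcongr
        exact (mul_le_mul_of_nonneg_left hW_mgf (exp_pos _).le).trans
          (exp_neg_mul_one_add_sq_pow_le hε0.le hε1 n)
    _ ≤ ℙ {ω | (∑ i, Y i) ω ≤ ε * n} := ofReal_one_sub_exp_mul_mgf_le hW_int _
    _ = _ := by simp [Y, S, heavyPart]

open Classical in
/-- **Bernoulli random matrix, heavy rows.** Let `B` be an `n × n` random matrix with
independent Bernoulli(`p`) entries and `ε ∈ (0,1/2]`. Call a row heavy if it contains more
than `21pn + 2 ln ε⁻¹` ones. Then with probability at least `1 - exp(-εn/2)` the heavy rows of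
`B` contain at most `εn` ones altogether. -/
theorem bernoulli_heavy_rows
    (n : ℕ) (Ω : Type) [MeasureSpace Ω] [IsProbabilityMeasure (ℙ : Measure Ω)]
    (p : ℝ) (hp0 : 0 ≤ p) (hp1 : p ≤ 1)
    (B : Ω → Matrix (Fin n) (Fin n) ℝ)
    (hmeas : ∀ i j, Measurable fun ω => B ω i j)
    (hindep : iIndepFun
      (fun q : Fin n × Fin n => fun ω => B ω q.1 q.2) ℙ)
    (h01 : ∀ i j, ∀ᵐ ω ∂ℙ, B ω i j = 0 ∨ B ω i j = 1)
    (hber : ∀ i j, ℙ {ω | B ω i j = 1} = ENNReal.ofReal p)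
    (ε : ℝ) (hε0 : 0 < ε) (hε1 : ε ≤ 1 / 2) :
    ENNReal.ofReal (1 - Real.exp (-(ε * n) / 2)) ≤
      ℙ {ω | ∑ i, (if 21 * p * n + 2 * Real.log ε⁻¹ < ∑ j, B ω i j
          then ∑ j, B ω i j else 0) ≤ ε * n} :=
  bernoulli_heavy_rows_general n Ω p hp0 B hmeas hindep h01 hber ε hε0 hε1
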